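/- arXiv:2502.05089 — 6 statements merged into one kernel-verified Lean document; each statement's English description precedes it below -/
import Mathlib

section
/- Let S = [[A, B], [C, D]] be a 2d×2d real symplectic matrix, and let B^+ denote the Moore–Penrose pseudo-inverse of B. Then for all x, y in the orthogonal complement of ker(B), one has (B^+ A x) · y = x · (B^+ A y). -/
open Matrix

/-- `Bp` is the Moore–Penrose pseudo-inverse of `B`. -/
def IsMoorePenroseInv {d : ℕ} (B Bp : Matrix (Fin d) (Fin d) ℝ) : Prop :=
  B * Bp * B = B ∧ Bp * B * Bp = Bp ∧ (B * Bp)ᵀ = B * Bp ∧ (Bp * B)ᵀ = Bp * B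

theorem pseudoinverse_symmetry_on_ker_perp (d : ℕ)
    (A B C D : Matrix (Fin d) (Fin d) ℝ)
    (J : Matrix (Fin d ⊕ Fin d) (Fin d ⊕ Fin d) ℝ)
    (hJ : J = Matrix.fromBlocks 0 1 (-1) 0)
    (hS : (Matrix.fromBlocks A B C D)ᵀ * J * (Matrix.fromBlocks A B C D) = J)
    (Bp : Matrix (Fin d) (Fin d) ℝ) (hBp : IsMoorePenroseInv B Bp)
    (x y : Fin d → ℝ)
    (hx : ∀ z : Fin d → ℝ, B.mulVec z = 0 → x ⬝ᵥ z = 0)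
    (hy : ∀ z : Fin d → ℝ, B.mulVec z = 0 → y ⬝ᵥ z = 0) :
    (Bp * A).mulVec x ⬝ᵥ y = x ⬝ᵥ (Bp * A).mulVec y := by
  obtain ⟨h1, h2, h3, h4⟩ := hBp
  set S := Matrix.fromBlocks A B C D with hSdef
  -- J * J = -1
  have hJJ : J * J = -1 := by
    subst hJ
    simp only [Matrix.fromBlocks_multiply]
    ext (i|i) (j|j) <;> simp [Matrix.one_apply]
  -- left inverse
  have hL : (-J * Sᵀ * J) * S = 1 := by
    calc (-J * Sᵀ * J) * S = -(J * (Sᵀ * J * S)) := by noncomm_ring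
    _ = -(J * J) := by rw [hS]
    _ = 1 := by rw [hJJ]; simp
  have hR : S * (-J * Sᵀ * J) = 1 := mul_eq_one_comm.mp hL
  -- S * J * Sᵀ = J
  have hSJS : S * J * Sᵀ = J := by
    have h5 : -(S * J * Sᵀ) = -J := by
      calc -(S * J * Sᵀ) = S * J * Sᵀ * -(-1) * (-1) := by noncomm_ring
      _ = S * J * Sᵀ * -(J * J) * (-1) := by rw [hJJ]
      _ = S * (-J * Sᵀ * J) * -J := by noncomm_ring
      _ = 1 * -J := by rw [hR]
      _ = -J := one_mul _
    exact neg_inj.mp h5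
  -- extract block: A * Bᵀ = B * Aᵀ
  have hAB : A * Bᵀ = B * Aᵀ := by
    have hblocks : S * J * Sᵀ = Matrix.fromBlocks (-B * Aᵀ + A * Bᵀ) (-B * Cᵀ + A * Dᵀ)
        (-D * Aᵀ + C * Bᵀ) (-D * Cᵀ + C * Dᵀ) := by
      rw [hSdef, hJ, Matrix.fromBlocks_transpose, Matrix.fromBlocks_multiply,
        Matrix.fromBlocks_multiply]
      simp [Matrix.mul_assoc]
    rw [hblocks, hJ] at hSJS
    have := congrArg Matrix.toBlocks₁₁ hSJS
    simp [Matrix.toBlocks_fromBlocks₁₁] at this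
    linear_combination (norm := noncomm_ring) this
  -- P := Bp * B fixes any vector orthogonal to ker B
  have hPfix : ∀ v : Fin d → ℝ, (∀ z : Fin d → ℝ, B.mulVec z = 0 → v ⬝ᵥ z = 0) →
      (Bp * B).mulVec v = v := by
    intro v hv
    set z := v - (Bp * B).mulVec v with hz
    have hBz : B.mulVec z = 0 := by
      simp [hz, Matrix.mulVec_sub, Matrix.mulVec_mulVec, ← Matrix.mul_assoc, h1]
    have hPz : (Bp * B).mulVec z = 0 := by
      have hPP : Bp * B * (Bp * B) = Bp * B := by
        calc Bp * B * (Bp * B) = (Bp * B * Bp) * B := by noncomm_ring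
        _ = Bp * B := by rw [h2]
      simp [hz, Matrix.mulVec_sub, Matrix.mulVec_mulVec, hPP]
    have hvz : v ⬝ᵥ z = 0 := hv z hBz
    have hPvz : (Bp * B).mulVec v ⬝ᵥ z = 0 := by
      calc (Bp * B).mulVec v ⬝ᵥ z = v ⬝ᵥ (Bp * B)ᵀ.mulVec z := by
            rw [Matrix.dotProduct_mulVec, Matrix.vecMul_transpose]
      _ = 0 := by rw [h4, hPz, dotProduct_zero]
    have hzz : z ⬝ᵥ z = 0 := by
      calc z ⬝ᵥ z = v ⬝ᵥ z - (Bp * B).mulVec v ⬝ᵥ z := by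
            rw [hz, sub_dotProduct]
      _ = 0 := by rw [hvz, hPvz]; ring
    have : z = 0 := by
      ext i
      have := dotProduct_self_eq_zero.mp hzz
      simpa using congrFun this i
    have := sub_eq_zero.mp (hz ▸ this)
    exact this.symm
  have hxP := hPfix x hx
  have hyP := hPfix y hy
  -- Bp * A * (Bp * B) is symmetric
  have hsymm : (Bp * A * (Bp * B))ᵀ = Bp * A * (Bp * B) := by
    have key : Bp * A * (Bp * B) = Bp * (B * Aᵀ) * Bpᵀ := by
      rw [← hAB]
      conv_lhs => rw [← h4, Matrix.transpose_mul]
      noncomm_ring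
    have key2 : (Bp * A * (Bp * B))ᵀ = Bp * (B * Aᵀ) * Bpᵀ := by
      rw [Matrix.transpose_mul, Matrix.transpose_mul Bp A, h4]
      noncomm_ring
    exact key2.trans key.symm
  -- conclude
  calc (Bp * A).mulVec x ⬝ᵥ y = (Bp * A).mulVec ((Bp * B).mulVec x) ⬝ᵥ y := by rw [hxP]
  _ = (Bp * A * (Bp * B)).mulVec x ⬝ᵥ y := by rw [Matrix.mulVec_mulVec]
  _ = x ⬝ᵥ (Bp * A * (Bp * B))ᵀ.mulVec y := by
        rw [Matrix.dotProduct_mulVec, Matrix.vecMul_transpose]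
  _ = x ⬝ᵥ (Bp * A * (Bp * B)).mulVec y := by rw [hsymm]
  _ = x ⬝ᵥ (Bp * A).mulVec ((Bp * B).mulVec y) := by rw [Matrix.mulVec_mulVec]
  _ = x ⬝ᵥ (Bp * A).mulVec y := by rw [hyP]
end

section
/- Let S = [[A, B], [C, D]] be a 2d×2d real symplectic matrix and let W : ℝ^r → ℝ^d be a linear isometry onto ker(B)^⊥. Then the r×r matrix W^T B^+ A W is symmetric, where B^+ is the Moore–Penrose pseudo-inverse of B. -/
open Matrix

private lemma matrix_ext_of_mulVec {d e : ℕ} (M N : Matrix (Fin d) (Fin e) ℝ)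
    (h : ∀ v, M.mulVec v = N.mulVec v) : M = N := by
  ext i j
  have := congrFun (h (Pi.single j 1)) i
  simpa [Matrix.mulVec_single] using this

theorem WT_Bplus_A_W_symmetric (d r : ℕ)
    (A B C D : Matrix (Fin d) (Fin d) ℝ)
    (J : Matrix (Fin d ⊕ Fin d) (Fin d ⊕ Fin d) ℝ)
    (hJ : J = Matrix.fromBlocks 0 1 (-1) 0)
    (hS : (Matrix.fromBlocks A B C D)ᵀ * J * (Matrix.fromBlocks A B C D) = J)
    (Bp : Matrix (Fin d) (Fin d) ℝ) (hBp : IsMoorePenroseInv B Bp)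
    (W : Matrix (Fin d) (Fin r) ℝ)
    (hW : Wᵀ * W = 1)
    (hWrange : ∀ x : Fin d → ℝ,
      (∃ t : Fin r → ℝ, W.mulVec t = x) ↔ (∀ z : Fin d → ℝ, B.mulVec z = 0 → x ⬝ᵥ z = 0)) :
    (Wᵀ * Bp * A * W)ᵀ = Wᵀ * Bp * A * W := by
  obtain ⟨hB1, hB2, hB3, hB4⟩ := hBp
  set S := Matrix.fromBlocks A B C D with hSdef
  -- J * J = -1
  have hJJ : J * J = -1 := by
    subst hJ
    rw [Matrix.fromBlocks_multiply]
    simp only [Matrix.mul_zero, Matrix.zero_mul, Matrix.mul_one, Matrix.one_mul,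
      Matrix.neg_mul, Matrix.mul_neg, add_zero, zero_add, neg_zero]
    calc Matrix.fromBlocks (-1) 0 0 (-1)
        = -(Matrix.fromBlocks (1 : Matrix (Fin d) (Fin d) ℝ) 0 0 1) := by
          rw [Matrix.fromBlocks_neg]; norm_num
    _ = -1 := by rw [Matrix.fromBlocks_one]
  -- S is invertible with inverse -(J * Sᵀ * J)
  have hinv : (-(J * Sᵀ * J)) * S = 1 := by
    calc (-(J * Sᵀ * J)) * S = -(J * (Sᵀ * J * S)) := by noncomm_ring
    _ = -(J * J) := by rw [hS]
    _ = 1 := by rw [hJJ]; simp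
  have hinv2 : S * (-(J * Sᵀ * J)) = 1 := mul_eq_one_comm.mp hinv
  -- S * J * Sᵀ = J
  have hSJS : S * J * Sᵀ = J := by
    have h1 : S * J * Sᵀ * J = -1 := by
      calc S * J * Sᵀ * J = -(S * (-(J * Sᵀ * J))) := by noncomm_ring
      _ = -1 := by rw [hinv2]
    calc S * J * Sᵀ = -(S * J * Sᵀ * (J * J)) := by rw [hJJ]; noncomm_ring
    _ = -(S * J * Sᵀ * J * J) := by noncomm_ring
    _ = -((-1 : Matrix _ _ ℝ) * J) := by rw [h1]
    _ = J := by simp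
  -- extract A * Bᵀ = B * Aᵀ from the (1,1) block
  have hA : A * Bᵀ = B * Aᵀ := by
    rw [hSdef, hJ, Matrix.fromBlocks_transpose, Matrix.fromBlocks_multiply,
      Matrix.fromBlocks_multiply] at hSJS
    have h0 := congrArg Matrix.toBlocks₁₁ hSJS
    simp only [Matrix.toBlocks_fromBlocks₁₁, Matrix.mul_zero, Matrix.zero_mul,
      Matrix.mul_one, Matrix.one_mul, Matrix.mul_neg, Matrix.neg_mul,
      add_zero, zero_add] at h0
    -- h0 : -(B * Aᵀ) + A * Bᵀ = 0
    exact (neg_add_eq_zero.mp h0).symm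
  -- Bp * B fixes every vector orthogonal to ker B
  have hfix : ∀ x : Fin d → ℝ, (∀ z, B.mulVec z = 0 → x ⬝ᵥ z = 0) →
      (Bp * B).mulVec x = x := by
    intro x hx
    set z := x - (Bp * B).mulVec x with hz
    have hBz : B.mulVec z = 0 := by
      rw [hz, Matrix.mulVec_sub, Matrix.mulVec_mulVec, ← Matrix.mul_assoc, hB1, sub_self]
    have h1 : x ⬝ᵥ z = 0 := hx z hBz
    have hPP : Bp * B * (Bp * B) = Bp * B := by
      calc Bp * B * (Bp * B) = Bp * B * Bp * B := by noncomm_ring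
      _ = Bp * B := by rw [hB2]
    have h2 : (Bp * B).mulVec x ⬝ᵥ z = 0 := by
      have hPz : (Bp * B).mulVec z = 0 := by
        rw [hz, Matrix.mulVec_sub, Matrix.mulVec_mulVec, hPP, sub_self]
      calc (Bp * B).mulVec x ⬝ᵥ z = x ⬝ᵥ (Bp * B)ᵀ.mulVec z := by
            rw [dotProduct_comm, Matrix.dotProduct_mulVec, Matrix.mulVec_transpose,
              dotProduct_comm]
      _ = x ⬝ᵥ (Bp * B).mulVec z := by rw [hB4]
      _ = 0 := by rw [hPz, dotProduct_zero]
    have hzz : z ⬝ᵥ z = 0 := by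
      have : z ⬝ᵥ z = x ⬝ᵥ z - (Bp * B).mulVec x ⬝ᵥ z := by
        rw [hz, sub_dotProduct]
      rw [this, h1, h2, sub_self]
    have hz0 : z = 0 := dotProduct_self_eq_zero.mp hzz
    have := sub_eq_zero.mp (hz ▸ hz0)
    exact this.symm
  -- range of Bp * B is orthogonal to ker B
  have hrange : ∀ y z : Fin d → ℝ, B.mulVec z = 0 → (Bp * B).mulVec y ⬝ᵥ z = 0 := by
    intro y z hBz
    calc (Bp * B).mulVec y ⬝ᵥ z = y ⬝ᵥ (Bp * B)ᵀ.mulVec z := by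
          rw [dotProduct_comm, Matrix.dotProduct_mulVec, Matrix.mulVec_transpose,
            dotProduct_comm]
    _ = y ⬝ᵥ (Bp * B).mulVec z := by rw [hB4]
    _ = 0 := by
        rw [← Matrix.mulVec_mulVec, hBz, Matrix.mulVec_zero, dotProduct_zero]
  -- helper: W * Wᵀ * W = W
  have hWWW : W * Wᵀ * W = W := by
    rw [Matrix.mul_assoc, hW, Matrix.mul_one]
  -- (Bp * B) * (W * Wᵀ) = W * Wᵀ
  have key1 : Bp * B * (W * Wᵀ) = W * Wᵀ := by
    apply matrix_ext_of_mulVec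
    intro v
    rw [← Matrix.mulVec_mulVec]
    apply hfix
    exact (hWrange ((W * Wᵀ).mulVec v)).mp
      ⟨Wᵀ.mulVec v, by rw [Matrix.mulVec_mulVec]⟩
  -- (W * Wᵀ) * (Bp * B) = Bp * B
  have key2 : W * Wᵀ * (Bp * B) = Bp * B := by
    apply matrix_ext_of_mulVec
    intro v
    rw [← Matrix.mulVec_mulVec]
    obtain ⟨t, ht⟩ := (hWrange ((Bp * B).mulVec v)).mpr (fun z hz => hrange v z hz)
    rw [← ht, Matrix.mulVec_mulVec, hWWW]
  -- W * Wᵀ = Bp * B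
  have hP : W * Wᵀ = Bp * B := by
    have h1 := congrArg Matrix.transpose key1
    rw [Matrix.transpose_mul, Matrix.transpose_mul, Matrix.transpose_transpose, hB4] at h1
    calc W * Wᵀ = W * Wᵀ * (Bp * B) := h1.symm
    _ = Bp * B := key2
  -- final computation
  have lhs : (Wᵀ * Bp * A * W)ᵀ = Wᵀ * Aᵀ * Bpᵀ * W := by
    simp [Matrix.transpose_mul, Matrix.mul_assoc]
  rw [lhs]
  have hWt : Wᵀ * (W * Wᵀ) = Wᵀ := by
    rw [← Matrix.mul_assoc, hW, Matrix.one_mul]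
  calc Wᵀ * Aᵀ * Bpᵀ * W
      = Wᵀ * (W * Wᵀ) * Aᵀ * Bpᵀ * W := by rw [hWt]
    _ = Wᵀ * (Bp * B) * Aᵀ * Bpᵀ * W := by rw [hP]
    _ = Wᵀ * Bp * (B * Aᵀ) * Bpᵀ * W := by simp only [Matrix.mul_assoc]
    _ = Wᵀ * Bp * (A * Bᵀ) * Bpᵀ * W := by rw [hA]
    _ = Wᵀ * Bp * A * (Bᵀ * Bpᵀ) * W := by simp only [Matrix.mul_assoc]
    _ = Wᵀ * Bp * A * ((Bp * B)ᵀ) * W := by rw [Matrix.transpose_mul]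
    _ = Wᵀ * Bp * A * (Bp * B) * W := by rw [hB4]
    _ = Wᵀ * Bp * A * (W * Wᵀ) * W := by rw [hP]
    _ = Wᵀ * Bp * A * (W * Wᵀ * W) := by simp only [Matrix.mul_assoc]
    _ = Wᵀ * Bp * A * W := by rw [hWWW]
end

section
/- Let S = [[A, B], [C, D]] be a 2d×2d real symplectic matrix and let V : ℝ^r → ℝ^d be a linear isometry onto range(B). Then the r×r matrix V^T D B^+ V is symmetric, where B^+ is the Moore–Penrose pseudo-inverse of B. -/
open Matrix

theorem VT_D_Bplus_V_symmetric (d r : ℕ)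
    (A B C D : Matrix (Fin d) (Fin d) ℝ)
    (J : Matrix (Fin d ⊕ Fin d) (Fin d ⊕ Fin d) ℝ)
    (hJ : J = Matrix.fromBlocks 0 1 (-1) 0)
    (hS : (Matrix.fromBlocks A B C D)ᵀ * J * (Matrix.fromBlocks A B C D) = J)
    (Bp : Matrix (Fin d) (Fin d) ℝ) (hBp : IsMoorePenroseInv B Bp)
    (V : Matrix (Fin d) (Fin r) ℝ)
    (hV : Vᵀ * V = 1)
    (hVrange : ∀ x : Fin d → ℝ,
      (∃ t : Fin r → ℝ, V.mulVec t = x) ↔ (∃ z : Fin d → ℝ, B.mulVec z = x)) :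
    (Vᵀ * D * Bp * V)ᵀ = Vᵀ * D * Bp * V := by
  obtain ⟨h1, h2, h3, h4⟩ := hBp
  -- `BᵀD = DᵀB` from the symplectic condition
  have hBD : Bᵀ * D = Dᵀ * B := by
    subst hJ
    rw [fromBlocks_transpose, fromBlocks_multiply, fromBlocks_multiply] at hS
    have h22 := congrArg Matrix.toBlocks₂₂ hS
    simp only [toBlocks_fromBlocks₂₂, Matrix.mul_zero, Matrix.zero_mul, Matrix.mul_one,
      Matrix.mul_neg, Matrix.neg_mul, add_zero, zero_add] at h22
    exact (neg_add_eq_zero.mp h22).symm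
  -- `B * Bp * V = V` since every column of `V` lies in the range of `B`
  have hProj : B * Bp * V = V := by
    ext i j
    obtain ⟨z, hz⟩ : ∃ z : Fin d → ℝ, B.mulVec z = V.mulVec (Pi.single j 1) :=
      (hVrange _).mp ⟨Pi.single j 1, rfl⟩
    have hv : (B * Bp * V).mulVec (Pi.single j 1) = V.mulVec (Pi.single j 1) := by
      rw [← Matrix.mulVec_mulVec, ← hz, Matrix.mulVec_mulVec, h1]
    have he := congrFun hv i
    rw [Matrix.mulVec_single_one, Matrix.mulVec_single_one] at he
    simpa using he
  calc (Vᵀ * D * Bp * V)ᵀ = Vᵀ * Bpᵀ * Dᵀ * V := by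
        simp [Matrix.transpose_mul, Matrix.mul_assoc]
    _ = Vᵀ * Bpᵀ * Dᵀ * (B * Bp * V) := by rw [hProj]
    _ = Vᵀ * Bpᵀ * (Dᵀ * B) * (Bp * V) := by simp only [Matrix.mul_assoc]
    _ = Vᵀ * Bpᵀ * (Bᵀ * D) * (Bp * V) := by rw [hBD]
    _ = (Vᵀ * (B * Bp)ᵀ) * (D * Bp * V) := by rw [Matrix.transpose_mul]; simp only [Matrix.mul_assoc]
    _ = (Vᵀ * (B * Bp)) * (D * Bp * V) := by rw [h3]
    _ = (B * Bp * V)ᵀ * (D * Bp * V) := by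
        rw [show (B * Bp * V)ᵀ = Vᵀ * (B * Bp) from by rw [Matrix.transpose_mul, h3]]
    _ = Vᵀ * D * Bp * V := by rw [hProj]; simp only [Matrix.mul_assoc]
end

section
/- The convolution of the kernel k₃(x,y) = exp(-2π i x y) on ℝ² with the Gaussian φ(x,y) = exp(-π(x²+y²)) equals (1/√2) exp(-π(x²+y²)/2 - iπ x y). In particular, k₃ * φ belongs to the Schwartz space S(ℝ²). -/
open Real MeasureTheory Complex

/-!
Fubini and two one-dimensional complex Gaussian integrals (completing the square) give the
closed form. For the Schwartz property, in the coordinates `u = x + y`, `v = x - y` the exponent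
`-π (x² + y²) / 2 - iπ x y` splits as `-π (1 + i) u² / 4 - π (1 - i) v² / 4`, so the function is
a tensor product of two one-dimensional Gaussians `exp (-b t²)` with `0 < re b` composed with a
linear isomorphism; such a Gaussian is Schwartz because its derivatives are polynomials times
itself.
-/

open scoped ContDiff SchwartzMap Polynomial

lemma Polynomial.norm_eval_le_sum {𝕜 : Type*} [NormedField 𝕜] (P : 𝕜[X]) (z : 𝕜) :
    ‖P.eval z‖ ≤ ∑ i ∈ Finset.range (P.natDegree + 1), ‖P.coeff i‖ * ‖z‖ ^ i := by
  rw [P.eval_eq_sum_range]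
  exact (norm_sum_le _ _).trans_eq (by simp)

lemma Prod.norm_pow_le_add {E F : Type*} [SeminormedAddCommGroup E] [SeminormedAddCommGroup F]
    (p : E × F) (k : ℕ) : ‖p‖ ^ k ≤ ‖p.1‖ ^ k + ‖p.2‖ ^ k := by
  rw [Prod.norm_def]
  rcases max_cases ‖p.1‖ ‖p.2‖ with ⟨h, -⟩ | ⟨h, -⟩ <;> rw [h] <;>
    linarith [pow_nonneg (norm_nonneg p.1) k, pow_nonneg (norm_nonneg p.2) k]

lemma ContinuousLinearMap.norm_iteratedFDeriv_comp_right_le {E F G : Type*}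
    [NormedAddCommGroup E] [NormedSpace ℝ E] [NormedAddCommGroup F] [NormedSpace ℝ F]
    [NormedAddCommGroup G] [NormedSpace ℝ G]
    (L : E →L[ℝ] F) {f : F → G} (hf : ContDiff ℝ ∞ f) (x : E) (i : ℕ) :
    ‖iteratedFDeriv ℝ i (f ∘ L) x‖ ≤ ‖iteratedFDeriv ℝ i f (L x)‖ * ‖L‖ ^ i := by
  rw [L.iteratedFDeriv_comp_right hf x (mod_cast le_top)]
  exact (ContinuousMultilinearMap.norm_compContinuousLinearMap_le _ _).trans_eq (by simp)

lemma exists_iteratedDeriv_cexp_neg_mul_sq_eq (b : ℂ) (n : ℕ) :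
    ∃ P : ℂ[X], iteratedDeriv n (fun t : ℝ ↦ cexp (-b * t ^ 2)) =
      fun t : ℝ ↦ P.eval (t : ℂ) * cexp (-b * t ^ 2) := by
  induction n with
  | zero => exact ⟨1, by simp⟩
  | succ n ih =>
    obtain ⟨P, hP⟩ := ih
    refine ⟨Polynomial.derivative P + P * (Polynomial.C (-2 * b) * Polynomial.X), ?_⟩
    rw [iteratedDeriv_succ, hP]
    funext t
    have hpoly := (P.hasDerivAt (t : ℂ)).comp_ofReal
    have hexp := ((hasDerivAt_pow 2 (t : ℂ)).const_mul (-b)).cexp.comp_ofReal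
    rw [(hpoly.fun_mul hexp).deriv]
    simp only [Polynomial.eval_add, Polynomial.eval_mul, Polynomial.eval_C, Polynomial.eval_X]
    push_cast
    ring

lemma abs_pow_mul_exp_neg_mul_sq_le {c : ℝ} (hc : 0 < c) (m : ℕ) (t : ℝ) :
    |t| ^ m * rexp (-(c * t ^ 2)) ≤ 1 + m.factorial / c ^ m := by
  have habs : |t| ^ m ≤ 1 + (t ^ 2) ^ m := by
    rcases le_total |t| 1 with h | h
    · linarith [pow_le_one₀ (n := m) (abs_nonneg t) h, pow_nonneg (sq_nonneg t) m]
    · rw [← sq_abs, ← pow_mul, two_mul, pow_add]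
      nlinarith [one_le_pow₀ (n := m) h]
  have hmoment : (t ^ 2) ^ m * rexp (-(c * t ^ 2)) ≤ m.factorial / c ^ m := by
    have h := pow_div_factorial_le_exp (c * t ^ 2) (by positivity) m
    rw [div_le_iff₀ (by positivity), mul_pow] at h
    rw [le_div_iff₀ (by positivity), Real.exp_neg, mul_right_comm, mul_comm _ (c ^ m),
      ← div_eq_mul_inv, div_le_iff₀ (Real.exp_pos _)]
    linarith
  have hexp : rexp (-(c * t ^ 2)) ≤ 1 := Real.exp_le_one_iff.mpr (neg_nonpos.mpr (by positivity))
  calc |t| ^ m * rexp (-(c * t ^ 2))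
      ≤ (1 + (t ^ 2) ^ m) * rexp (-(c * t ^ 2)) := by gcongr
    _ = rexp (-(c * t ^ 2)) + (t ^ 2) ^ m * rexp (-(c * t ^ 2)) := by ring
    _ ≤ 1 + m.factorial / c ^ m := add_le_add hexp hmoment

noncomputable def gaussianSchwartz (b : ℂ) (hb : 0 < b.re) : 𝓢(ℝ, ℂ) where
  toFun t := cexp (-b * t ^ 2)
  smooth' := contDiff_const.mul (ofRealCLM.contDiff.pow 2) |>.cexp
  decay' k n := by
    obtain ⟨P, hP⟩ := exists_iteratedDeriv_cexp_neg_mul_sq_eq b n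
    refine ⟨∑ i ∈ Finset.range (P.natDegree + 1),
      ‖P.coeff i‖ * (1 + (k + i).factorial / b.re ^ (k + i)), fun t ↦ ?_⟩
    rw [norm_iteratedFDeriv_eq_norm_iteratedDeriv, hP, norm_mul, norm_cexp_neg_mul_sq,
      Real.norm_eq_abs]
    calc |t| ^ k * (‖P.eval (t : ℂ)‖ * rexp (-b.re * t ^ 2))
        ≤ |t| ^ k * ((∑ i ∈ Finset.range (P.natDegree + 1), ‖P.coeff i‖ * |t| ^ i) *
            rexp (-b.re * t ^ 2)) := by
          gcongr
          simpa using P.norm_eval_le_sum (t : ℂ)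
      _ = ∑ i ∈ Finset.range (P.natDegree + 1),
            ‖P.coeff i‖ * (|t| ^ (k + i) * rexp (-(b.re * t ^ 2))) := by
          rw [Finset.sum_mul, Finset.mul_sum]
          exact Finset.sum_congr rfl fun i _ ↦ by ring_nf
      _ ≤ _ := by
          gcongr with i
          exact abs_pow_mul_exp_neg_mul_sq_le hb _ t

@[simp]
lemma gaussianSchwartz_apply (b : ℂ) (hb : 0 < b.re) (t : ℝ) :
    gaussianSchwartz b hb t = cexp (-b * t ^ 2) := rfl

namespace SchwartzMap

variable {E F A : Type*} [NormedAddCommGroup E] [NormedSpace ℝ E]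
  [NormedAddCommGroup F] [NormedSpace ℝ F] [NormedRing A] [NormedAlgebra ℝ A]

lemma norm_iteratedFDeriv_comp_fst_le (f : 𝓢(E, A)) (p : E × F) (i : ℕ) :
    ‖iteratedFDeriv ℝ i (fun p : E × F ↦ f p.1) p‖ ≤ ‖iteratedFDeriv ℝ i f p.1‖ :=
  ((ContinuousLinearMap.fst ℝ E F).norm_iteratedFDeriv_comp_right_le (f.smooth ⊤) p i).trans <|
    mul_le_of_le_one_right (norm_nonneg _)
      (pow_le_one₀ (norm_nonneg _) (ContinuousLinearMap.norm_fst_le ℝ E F))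

lemma norm_iteratedFDeriv_comp_snd_le (g : 𝓢(F, A)) (p : E × F) (i : ℕ) :
    ‖iteratedFDeriv ℝ i (fun p : E × F ↦ g p.2) p‖ ≤ ‖iteratedFDeriv ℝ i g p.2‖ :=
  ((ContinuousLinearMap.snd ℝ E F).norm_iteratedFDeriv_comp_right_le (g.smooth ⊤) p i).trans <|
    mul_le_of_le_one_right (norm_nonneg _)
      (pow_le_one₀ (norm_nonneg _) (ContinuousLinearMap.norm_snd_le ℝ E F))

noncomputable def tensor (f : 𝓢(E, A)) (g : 𝓢(F, A)) : 𝓢(E × F, A) where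
  toFun p := f p.1 * g p.2
  smooth' := ((f.smooth ⊤).comp contDiff_fst).mul ((g.smooth ⊤).comp contDiff_snd)
  decay' k n := by
    refine ⟨∑ i ∈ Finset.range (n + 1), n.choose i *
      (SchwartzMap.seminorm ℝ k i f * SchwartzMap.seminorm ℝ 0 (n - i) g +
        SchwartzMap.seminorm ℝ 0 i f * SchwartzMap.seminorm ℝ k (n - i) g), fun p ↦ ?_⟩
    have hLeibniz := norm_iteratedFDeriv_mul_le (n := n) ((f.smooth ⊤).comp contDiff_fst)
      ((g.smooth ⊤).comp contDiff_snd) p (mod_cast le_top)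
    calc ‖p‖ ^ k * ‖iteratedFDeriv ℝ n (fun p : E × F ↦ f p.1 * g p.2) p‖
        ≤ (‖p.1‖ ^ k + ‖p.2‖ ^ k) * ∑ i ∈ Finset.range (n + 1), n.choose i *
            ‖iteratedFDeriv ℝ i f p.1‖ * ‖iteratedFDeriv ℝ (n - i) g p.2‖ := by
          gcongr
          · exact p.norm_pow_le_add k
          · refine hLeibniz.trans (Finset.sum_le_sum fun i _ ↦ ?_)
            gcongr
            · exact norm_iteratedFDeriv_comp_fst_le f p i
            · exact norm_iteratedFDeriv_comp_snd_le g p (n - i)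
      _ = ∑ i ∈ Finset.range (n + 1), n.choose i *
            ((‖p.1‖ ^ k * ‖iteratedFDeriv ℝ i f p.1‖) * ‖iteratedFDeriv ℝ (n - i) g p.2‖ +
              ‖iteratedFDeriv ℝ i f p.1‖ * (‖p.2‖ ^ k * ‖iteratedFDeriv ℝ (n - i) g p.2‖)) := by
          rw [Finset.mul_sum]
          exact Finset.sum_congr rfl fun i _ ↦ by ring
      _ ≤ _ := by
          gcongr with i
          · exact le_seminorm ℝ k i f p.1
          · exact norm_iteratedFDeriv_le_seminorm ℝ g (n - i) p.2
          · exact norm_iteratedFDeriv_le_seminorm ℝ f i p.1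
          · exact le_seminorm ℝ k (n - i) g p.2

@[simp]
lemma tensor_apply (f : 𝓢(E, A)) (g : 𝓢(F, A)) (p : E × F) : tensor f g p = f p.1 * g p.2 :=
  rfl

end SchwartzMap

noncomputable def sumDiffEquiv : (ℝ × ℝ) ≃L[ℝ] ℝ × ℝ :=
  let L := (ContinuousLinearMap.fst ℝ ℝ ℝ + .snd ℝ ℝ ℝ).prod (.fst ℝ ℝ ℝ - .snd ℝ ℝ ℝ)
  .equivOfInverse L ((2 : ℝ)⁻¹ • L) (fun p ↦ by ext <;> simp [L] <;> ring)
    (fun p ↦ by ext <;> simp [L] <;> ring)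

@[simp]
lemma sumDiffEquiv_apply (p : ℝ × ℝ) : sumDiffEquiv p = (p.1 + p.2, p.1 - p.2) := rfl

noncomputable def chirpedGaussian : 𝓢(ℝ × ℝ, ℂ) :=
  SchwartzMap.compCLMOfContinuousLinearEquiv ℂ sumDiffEquiv <|
    (gaussianSchwartz (π * (1 + I) / 4) (by simp [pi_pos])).tensor
      (gaussianSchwartz (π * (1 - I) / 4) (by simp [pi_pos]))

lemma chirpedGaussian_apply (p : ℝ × ℝ) :
    chirpedGaussian p = cexp (-π * ((p.1 : ℂ) ^ 2 + (p.2 : ℂ) ^ 2) / 2 - I * π * p.1 * p.2) := by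
  simp only [chirpedGaussian, SchwartzMap.compCLMOfContinuousLinearEquiv_apply,
    Function.comp_apply, sumDiffEquiv_apply, SchwartzMap.tensor_apply, gaussianSchwartz_apply,
    ← Complex.exp_add]
  congr 1
  push_cast
  ring

lemma kernel_mul_gaussian_eq (x y u v : ℝ) :
    cexp (-2 * π * I * u * v) * (rexp (-π * ((x - u) ^ 2 + (y - v) ^ 2)) : ℂ) =
      cexp (-π * v ^ 2 + (2 * π * y - 2 * π * I * u) * v + (-π * (x - u) ^ 2 - π * y ^ 2)) := by
  rw [ofReal_exp, ← Complex.exp_add]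
  congr 1
  push_cast
  ring

lemma integrable_kernel_mul_gaussian (x y : ℝ) :
    Integrable (fun p : ℝ × ℝ ↦
      cexp (-2 * π * I * p.1 * p.2) * (rexp (-π * ((x - p.1) ^ 2 + (y - p.2) ^ 2)) : ℂ)) := by
  have hg : Integrable fun p : ℝ × ℝ ↦ rexp (-π * (x - p.1) ^ 2) * rexp (-π * (y - p.2) ^ 2) := by
    rw [Measure.volume_eq_prod]
    exact ((integrable_exp_neg_mul_sq pi_pos).comp_sub_left x).mul_prod
      ((integrable_exp_neg_mul_sq pi_pos).comp_sub_left y)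
  simp_rw [mul_add, Real.exp_add]
  refine (hg.ofReal (𝕜 := ℂ)).bdd_mul (c := 1) (by fun_prop) (.of_forall fun p ↦ ?_)
  simp [norm_exp]

lemma integral_kernel_mul_gaussian_snd (x y u : ℝ) :
    ∫ v : ℝ, cexp (-2 * π * I * u * v) * (rexp (-π * ((x - u) ^ 2 + (y - v) ^ 2)) : ℂ) =
      cexp (-(2 * π) * u ^ 2 + (2 * π * x - 2 * π * I * y) * u + -π * x ^ 2) := by
  have hπ : (π : ℂ) ≠ 0 := ofReal_ne_zero.mpr pi_ne_zero
  simp_rw [kernel_mul_gaussian_eq]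
  rw [integral_cexp_quadratic (by simp [pi_pos]), neg_neg, div_self hπ, one_cpow, one_mul]
  congr 1
  field_simp
  ring_nf
  rw [I_sq]
  ring

lemma integral_kernel_mul_gaussian (x y : ℝ) :
    ∫ p : ℝ × ℝ, cexp (-2 * π * I * p.1 * p.2) * (rexp (-π * ((x - p.1) ^ 2 + (y - p.2) ^ 2)) : ℂ)
      = (1 / √2 : ℝ) * cexp (-π * ((x : ℂ) ^ 2 + (y : ℂ) ^ 2) / 2 - I * π * x * y) := by
  have hπ : (π : ℂ) ≠ 0 := ofReal_ne_zero.mpr pi_ne_zero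
  have hint := integrable_kernel_mul_gaussian x y
  rw [Measure.volume_eq_prod] at hint ⊢
  rw [integral_prod _ hint]
  simp_rw [integral_kernel_mul_gaussian_snd]
  rw [integral_cexp_quadratic (by simp [pi_pos]), neg_neg]
  have hconst : (π / (2 * π) : ℂ) ^ (1 / 2 : ℂ) = (1 / √2 : ℝ) := by
    rw [div_mul_cancel_right₀ hπ, show (2 : ℂ)⁻¹ = ((2⁻¹ : ℝ) : ℂ) by push_cast; rfl,
      show (1 / 2 : ℂ) = ((1 / 2 : ℝ) : ℂ) by push_cast; rfl, ← ofReal_cpow (by norm_num),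
      ← sqrt_eq_rpow, sqrt_inv, one_div]
  rw [hconst]
  congr 2
  field_simp
  ring_nf
  rw [I_sq]
  ring

theorem fourier_kernel_smoothed (k₃ : ℝ → ℝ → ℂ)
    (hk₃ : ∀ x y : ℝ, k₃ x y = Complex.exp (-2 * π * Complex.I * x * y))
    (φ : ℝ → ℝ → ℝ)
    (hφ : ∀ x y : ℝ, φ x y = Real.exp (-π * (x ^ 2 + y ^ 2))) :
    (∀ x y : ℝ,
      (∫ p : ℝ × ℝ, k₃ p.1 p.2 * (φ (x - p.1) (y - p.2) : ℂ))
        = (1 / Real.sqrt 2 : ℝ) *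
            Complex.exp (-(π : ℂ) * ((x : ℂ) ^ 2 + (y : ℂ) ^ 2) / 2
              - Complex.I * π * x * y)) ∧
    ∃ g : SchwartzMap (ℝ × ℝ) ℂ, ∀ p : ℝ × ℝ,
      g p = ∫ q : ℝ × ℝ, k₃ q.1 q.2 * (φ (p.1 - q.1) (p.2 - q.2) : ℂ) := by
  have hconv : ∀ x y : ℝ, ∫ p : ℝ × ℝ, k₃ p.1 p.2 * (φ (x - p.1) (y - p.2) : ℂ)
      = (1 / √2 : ℝ) * cexp (-π * ((x : ℂ) ^ 2 + (y : ℂ) ^ 2) / 2 - I * π * x * y) := by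
    intro x y
    simp only [hk₃, hφ]
    exact integral_kernel_mul_gaussian x y
  refine ⟨hconv, ((1 / √2 : ℝ) : ℂ) • chirpedGaussian, fun p ↦ ?_⟩
  rw [hconv, smul_apply, chirpedGaussian_apply, smul_eq_mul]
end

section
/- For D ∈ ℝ, D ≠ 0, the convolution of the distribution k₁(x,y) = |D|^{1/2} δ(y - Dx) on ℝ² with the Gaussian φ(x,y) = exp(-π(x²+y²)) is the function (x,y) ↦ λ₁ exp(-λ₂ (y - Dx)²), where λ₁ = |D|^{1/2}(1+D²)^{-1/2} and λ₂ = π/(1+D²). -/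
open Real MeasureTheory

/-! Completing the square in `t`, the integrand factors as a Gaussian of variance
`1 / (2π(1 + D²))` centred at `(x + D y) / (1 + D²)` times `exp (-π (y - D x)² / (1 + D²))`;
the Gaussian integral supplies the factor `(1 + D²)^(-1/2)`. -/

lemma sq_sub_add_sq_sub_mul_eq (D x y t : ℝ) :
    (x - t) ^ 2 + (y - D * t) ^ 2
      = (1 + D ^ 2) * (t - (x + D * y) / (1 + D ^ 2)) ^ 2 + (y - D * x) ^ 2 / (1 + D ^ 2) := by
  field_simp
  ring

lemma integral_exp_neg_mul_sub_sq (b m : ℝ) :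
    ∫ t : ℝ, exp (-b * (t - m) ^ 2) = √(π / b) :=
  (integral_sub_right_eq_self (fun t : ℝ => exp (-b * t ^ 2)) m).trans (integral_gaussian b)

lemma integral_exp_neg_pi_mul_sq_sub_add_sq_sub_mul (D x y : ℝ) :
    ∫ t : ℝ, exp (-π * ((x - t) ^ 2 + (y - D * t) ^ 2))
      = (1 + D ^ 2) ^ (-(1:ℝ)/2) * exp (-(π / (1 + D ^ 2)) * (y - D * x) ^ 2) := by
  have ha : 0 < 1 + D ^ 2 := by positivity
  have h_factor : ∀ t : ℝ, exp (-π * ((x - t) ^ 2 + (y - D * t) ^ 2))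
      = exp (-(π / (1 + D ^ 2)) * (y - D * x) ^ 2)
        * exp (-(π * (1 + D ^ 2)) * (t - (x + D * y) / (1 + D ^ 2)) ^ 2) := by
    intro t
    rw [sq_sub_add_sq_sub_mul_eq, ← exp_add]
    congr 1
    ring
  have h_sqrt : √(π / (π * (1 + D ^ 2))) = (1 + D ^ 2) ^ (-(1:ℝ)/2) := by
    rw [div_mul_cancel_left₀ pi_ne_zero, sqrt_eq_rpow, ← rpow_neg_one, ← rpow_mul ha.le]
    norm_num
  simp_rw [h_factor]
  rw [integral_const_mul, integral_exp_neg_mul_sub_sq, h_sqrt, mul_comm]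

theorem dilation_kernel_smoothed_general (D : ℝ) :
    ∀ x y : ℝ,
      |D| ^ ((1:ℝ)/2) * (∫ t : ℝ, Real.exp (-π * ((x - t) ^ 2 + (y - D * t) ^ 2)))
        = |D| ^ ((1:ℝ)/2) * (1 + D ^ 2) ^ (-(1:ℝ)/2) *
            Real.exp (-(π / (1 + D ^ 2)) * (y - D * x) ^ 2) := by
  intro x y
  rw [integral_exp_neg_pi_mul_sq_sub_add_sq_sub_mul, mul_assoc]

theorem dilation_kernel_smoothed (D : ℝ) (hD : D ≠ 0) :
    ∀ x y : ℝ,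
      |D| ^ ((1:ℝ)/2) * (∫ t : ℝ, Real.exp (-π * ((x - t) ^ 2 + (y - D * t) ^ 2)))
        = |D| ^ ((1:ℝ)/2) * (1 + D ^ 2) ^ (-(1:ℝ)/2) *
            Real.exp (-(π / (1 + D ^ 2)) * (y - D * x) ^ 2) :=
  dilation_kernel_smoothed_general D
end

section
/- Let D ∈ GL(d, ℝ) and C ∈ ℝ^{d×d} with D C^T = C D^T, and let Q = (I + D D^T + C D^T (I + D D^T)^{-1} D C^T)^{-1}. Define the symmetric 2d×2d matrix M = [[I - Q, -Q D], [-D^T Q, I - D^T Q D]]. Then (x, y) ∈ ker(M) if and only if x ∈ ker(C^T) and y = D^T x. -/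
/-!
With `S = 1 + D Dᵀ` and `K = D Cᵀ`, the matrix inverted to define `Q` is `S + Kᵀ S⁻¹ K`, which is
positive definite. A vector `(x, y)` lies in `ker M` iff `y = Dᵀ x` and `x = Q S x`, i.e. iff
`Kᵀ S⁻¹ K x = 0`. Positive definiteness of `S⁻¹` turns this into `K x = 0`, and invertibility of
`D` into `Cᵀ x = 0`.
-/

open Matrix
open scoped ComplexOrder

namespace Matrix

variable {m n : Type*} [Fintype m] [Fintype n]

theorem fromBlocks_one_sub_mulVec_eq_zero_iff [DecidableEq m] [DecidableEq n]
    {R : Type*} [CommRing R] (Q : Matrix m m R) (D : Matrix m n R) (x : m → R) (y : n → R) :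
    fromBlocks (1 - Q) (-(Q * D)) (-(Dᵀ * Q)) (1 - Dᵀ * Q * D) *ᵥ Sum.elim x y = 0 ↔
      y = Dᵀ *ᵥ x ∧ x = Q *ᵥ ((1 + D * Dᵀ) *ᵥ x) := by
  have hfst : (1 - Q) *ᵥ x + (-(Q * D)) *ᵥ y = x - Q *ᵥ (x + D *ᵥ y) := by
    simp only [sub_mulVec, one_mulVec, neg_mulVec, mulVec_add, ← mulVec_mulVec]
    abel
  have hsnd : (-(Dᵀ * Q)) *ᵥ x + (1 - Dᵀ * Q * D) *ᵥ y = y - Dᵀ *ᵥ Q *ᵥ (x + D *ᵥ y) := by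
    simp only [sub_mulVec, one_mulVec, neg_mulVec, mulVec_add, ← mulVec_mulVec]
    abel
  rw [fromBlocks_mulVec, Sum.elim_comp_inl, Sum.elim_comp_inr, ← Sum.elim_zero_zero,
    Sum.elim_eq_iff, hfst, hsnd, sub_eq_zero, sub_eq_zero, add_mulVec, one_mulVec, ← mulVec_mulVec]
  constructor
  · rintro ⟨hx, hy⟩
    obtain rfl : y = Dᵀ *ᵥ x := by rwa [← hx] at hy
    exact ⟨rfl, hx⟩
  · rintro ⟨rfl, hx⟩
    exact ⟨hx, by rw [← hx]⟩

theorem eq_inv_add_mulVec_mulVec_iff [DecidableEq n] {K : Type*} [Field K] {S T : Matrix n n K}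
    (h : IsUnit (S + T)) (x : n → K) :
    x = (S + T)⁻¹ *ᵥ S *ᵥ x ↔ T *ᵥ x = 0 := by
  rw [← (mulVec_injective_iff_isUnit.mpr h).eq_iff, mulVec_mulVec,
    mul_nonsing_inv _ ((isUnit_iff_isUnit_det _).mp h), one_mulVec, add_mulVec, add_eq_left]

theorem PosDef.conjTranspose_mul_mul_mulVec_eq_zero_iff {𝕜 : Type*} [RCLike 𝕜]
    {A : Matrix m m 𝕜} (hA : A.PosDef) (K : Matrix m n 𝕜) (x : n → 𝕜) :
    (Kᴴ * A * K) *ᵥ x = 0 ↔ K *ᵥ x = 0 := by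
  refine ⟨fun h ↦ ?_, fun h ↦ by rw [← mulVec_mulVec, h, mulVec_zero]⟩
  rw [← (hA.posSemidef.conjTranspose_mul_mul_same K).dotProduct_mulVec_zero_iff,
    ← mulVec_mulVec, ← mulVec_mulVec, dotProduct_mulVec, ← star_mulVec] at h
  by_contra hK
  exact (hA.dotProduct_mulVec_pos hK).ne' h

end Matrix

theorem ker_M_eq_graph_general (d : ℕ)
    (C D : Matrix (Fin d) (Fin d) ℝ)
    (hD : IsUnit D)
    (Q : Matrix (Fin d) (Fin d) ℝ)
    (hQ : Q = (1 + D * Dᵀ + C * Dᵀ * (1 + D * Dᵀ)⁻¹ * D * Cᵀ)⁻¹)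
    (M : Matrix (Fin d ⊕ Fin d) (Fin d ⊕ Fin d) ℝ)
    (hM : M = Matrix.fromBlocks (1 - Q) (-(Q * D)) (-(Dᵀ * Q)) (1 - Dᵀ * Q * D))
    (x y : Fin d → ℝ) :
    M.mulVec (Sum.elim x y) = 0 ↔ (Cᵀ.mulVec x = 0 ∧ y = Dᵀ.mulVec x) := by
  set S := 1 + D * Dᵀ
  set K := D * Cᵀ
  have hS : S.PosDef := by
    simpa only [conjTranspose_eq_transpose_of_trivial] using
      PosDef.one.add_posSemidef (posSemidef_self_mul_conjTranspose D)
  have hR : (S + Kᴴ * S⁻¹ * K).PosDef :=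
    hS.add_posSemidef (hS.inv.posSemidef.conjTranspose_mul_mul_same K)
  have hQR : Q = (S + Kᴴ * S⁻¹ * K)⁻¹ := by
    rw [hQ, conjTranspose_eq_transpose_of_trivial, transpose_mul, transpose_transpose]
    simp only [K, Matrix.mul_assoc]
  rw [hM, fromBlocks_one_sub_mulVec_eq_zero_iff, hQR, eq_inv_add_mulVec_mulVec_iff hR.isUnit,
    hS.inv.conjTranspose_mul_mul_mulVec_eq_zero_iff, ← mulVec_mulVec,
    (mulVec_injective_iff_isUnit.mpr hD).eq_iff' (mulVec_zero D), and_comm]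

theorem ker_M_eq_graph (d : ℕ)
    (C D : Matrix (Fin d) (Fin d) ℝ)
    (hD : IsUnit D) (hCD : D * Cᵀ = C * Dᵀ)
    (Q : Matrix (Fin d) (Fin d) ℝ)
    (hQ : Q = (1 + D * Dᵀ + C * Dᵀ * (1 + D * Dᵀ)⁻¹ * D * Cᵀ)⁻¹)
    (M : Matrix (Fin d ⊕ Fin d) (Fin d ⊕ Fin d) ℝ)
    (hM : M = Matrix.fromBlocks (1 - Q) (-(Q * D)) (-(Dᵀ * Q)) (1 - Dᵀ * Q * D))
    (x y : Fin d → ℝ) :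
    M.mulVec (Sum.elim x y) = 0 ↔ (Cᵀ.mulVec x = 0 ∧ y = Dᵀ.mulVec x) :=
  ker_M_eq_graph_general d C D hD Q hQ M hM x y
end
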